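/- arXiv:2008.12043 — 3 statements merged into one kernel-verified Lean document; each statement's English description precedes it below -/
import Mathlib

section
/- In situation i), let α ∈ (0,1) be an atom of ρ with ν({α}) = 0. For a realization of the observations define, when they exist, h(αα) := lim_{n→∞} (1/n) Σ_{k=1}^{n} 1{χ(k−1) = α, χ(k) = α} and h(ααα) := lim_{n→∞} (1/n) Σ_{k=1}^{n} 1{χ(k−1) = α, χ(k) = α, χ(k+1) = α}. Then almost surely in ω, (ξ, Y), and X, on the event that both limits exist and h(αα) > 0, one has h(ααα) ≥ (1−p)·κ·h(αα). -/
open MeasureTheory ProbabilityTheory Filter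

noncomputable section

open Classical in
/-- Indicator of a proposition, as a real number. -/
def ind (P : Prop) : ℝ := if P then 1 else 0

/-- Bernoulli(p) law on ℝ (mass 1-p at 0, mass p at 1). -/
def bern (p : ℝ) : Measure ℝ :=
  ENNReal.ofReal (1 - p) • Measure.dirac 0 + ENNReal.ofReal p • Measure.dirac 1

/-- Uniform law on [0,1]. -/
def unif : Measure ℝ := volume.restrict (Set.Icc (0:ℝ) 1)

/-- The combined family of the basic random variables (environment, uniform drivers of the
walk, Bernoulli error indicators, error values), used to state their joint independence. -/
def family {Ω : Type} (env : Ω → ℤ → ℝ) (U ξ Y : Ω → ℕ → ℝ) :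
    (ℤ ⊕ (ℕ ⊕ (ℕ ⊕ ℕ))) → Ω → ℝ
  | Sum.inl z => fun w => env w z
  | Sum.inr (Sum.inl n) => fun w => U w n
  | Sum.inr (Sum.inr (Sum.inl n)) => fun w => ξ w n
  | Sum.inr (Sum.inr (Sum.inr n)) => fun w => Y w n

/-- Situation i): the walk driven by the uniform variables `U` in the environment `env`;
it jumps from `z` to `z+1` with probability `env z`, i.e. iff `U n < env (X n)`. -/
def walkI (env : ℤ → ℝ) (U : ℕ → ℝ) : ℕ → ℤ
  | 0 => 0
  | n + 1 => walkI env U n + if U n < env (walkI env U n) then 1 else -1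

/-- Situation i): the corrupted observations χ(n) = χ'(n)(1-ξ(n)) + Y(n)ξ(n),
where χ'(n) = ω(X_n). -/
def obsI (env : ℤ → ℝ) (U ξ Y : ℕ → ℝ) (n : ℕ) : ℝ :=
  env (walkI env U n) * (1 - ξ n) + Y n * ξ n

/-- The set-up of situation i) (Sinai's walk with corrupted observations): `ρ` is a probability
measure on `(κ, 1-κ)` satisfying the standard variance and recurrence assumptions, the
environment coordinates are i.i.d. `ρ`, the walk drivers are i.i.d. uniform on `[0,1]`, the
error indicators are i.i.d. Bernoulli(`p`), the error values are i.i.d. `ν` on `(0,1)`,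
and all these random variables are mutually independent under `μ`. -/
structure SetupI {Ω : Type} [MeasurableSpace Ω] (μ : Measure Ω)
    (κ : ℝ) (ρ ν : Measure ℝ) (p : ℝ)
    (env : Ω → ℤ → ℝ) (U ξ Y : Ω → ℕ → ℝ) : Prop where
  probμ : IsProbabilityMeasure μ
  probρ : IsProbabilityMeasure ρ
  probν : IsProbabilityMeasure ν
  suppρ : ρ (Set.Ioo κ (1 - κ)) = 1
  suppν : ν (Set.Ioo 0 1) = 1
  varfin : Integrable (fun x => (Real.log (x / (1 - x)))^2) ρ
  varpos : 0 < ∫ x, (Real.log (x / (1 - x)))^2 ∂ρ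
  recu : ∫ x, Real.log (x / (1 - x)) ∂ρ = 0
  meas : ∀ i, Measurable (family env U ξ Y i)
  indep : iIndepFun (family env U ξ Y) μ
  lawEnv : ∀ z, μ.map (fun w => env w z) = ρ
  lawU : ∀ n, μ.map (fun w => U w n) = unif
  lawξ : ∀ n, μ.map (fun w => ξ w n) = bern p
  lawY : ∀ n, μ.map (fun w => Y w n) = ν

lemma ind_nonneg {P : Prop} : 0 ≤ ind P := by unfold ind; split <;> norm_num

lemma ind_le_one {P : Prop} : ind P ≤ 1 := by unfold ind; split <;> norm_num

lemma abs_ind_le_one {P : Prop} : |ind P| ≤ 1 := by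
  rw [abs_le]; exact ⟨by linarith [ind_nonneg (P := P)], ind_le_one⟩

lemma ind_of {P : Prop} (h : P) : ind P = 1 := by simp [ind, h]

lemma ind_of_not {P : Prop} (h : ¬ P) : ind P = 0 := by simp [ind, h]

/-- The `Φ` function: `Φ((h,d,a),(u,x)) = h·1{a ∈ [κ,1-κ]}·(1{cond_d(u,a)}·1{x=0} - (1-p)·r_d(a))`. -/
def Phi (κ p : ℝ) (q : ℝ × ℝ × ℝ) (v : ℝ × ℝ) : ℝ :=
  q.1 * ind (q.2.2 ∈ Set.Icc κ (1 - κ)) *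
    (ind (if q.2.1 = 1 then q.2.2 ≤ v.1 else v.1 < q.2.2) * ind (v.2 = 0)
      - (1 - p) * (if q.2.1 = 1 then 1 - q.2.2 else q.2.2))

/-- The pair event at time `k`. -/
def pairE (α : ℝ) (env : ℤ → ℝ) (U ξ Y : ℕ → ℝ) (k : ℕ) : Prop :=
  obsI env U ξ Y k = α ∧ obsI env U ξ Y (k + 1) = α

/-- The data `(1_{pair}, 1_{dir}, env(X_{k+1}))`. -/
def Qp (α : ℝ) (env : ℤ → ℝ) (U ξ Y : ℕ → ℝ) (k : ℕ) : ℝ × ℝ × ℝ :=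
  (ind (pairE α env U ξ Y k), ind (walkI env U k < walkI env U (k + 1)),
    env (walkI env U (k + 1)))

/-- The centred increment `D_k`. -/
def DD (κ p α : ℝ) (env : ℤ → ℝ) (U ξ Y : ℕ → ℝ) (k : ℕ) : ℝ :=
  Phi κ p (Qp α env U ξ Y k) (U (k + 1), ξ (k + 2))

lemma Phi_abs_le {κ p : ℝ} (hκ0 : 0 < κ) (hp0 : 0 ≤ p) (hp1 : p ≤ 1)
    {q : ℝ × ℝ × ℝ} (hq : |q.1| ≤ 1) (v : ℝ × ℝ) : |Phi κ p q v| ≤ 1 := by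
  by_cases hIcc : q.2.2 ∈ Set.Icc κ (1 - κ)
  · have ha := hIcc.1
    have hb := hIcc.2
    have hr : (0:ℝ) ≤ (if q.2.1 = 1 then 1 - q.2.2 else q.2.2) ∧
        (if q.2.1 = 1 then 1 - q.2.2 else q.2.2) ≤ 1 := by
      constructor <;> split <;> nlinarith
    have h2 : |ind (if q.2.1 = 1 then q.2.2 ≤ v.1 else v.1 < q.2.2) * ind (v.2 = 0)
        - (1 - p) * (if q.2.1 = 1 then 1 - q.2.2 else q.2.2)| ≤ 1 := by
      rw [abs_le]
      constructor
      · nlinarith [ind_nonneg (P := (if q.2.1 = 1 then q.2.2 ≤ v.1 else v.1 < q.2.2)),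
          ind_nonneg (P := (v.2 = 0)), hr.1, hr.2]
      · nlinarith [ind_le_one (P := (if q.2.1 = 1 then q.2.2 ≤ v.1 else v.1 < q.2.2)),
          ind_le_one (P := (v.2 = 0)),
          ind_nonneg (P := (if q.2.1 = 1 then q.2.2 ≤ v.1 else v.1 < q.2.2)),
          ind_nonneg (P := (v.2 = 0)), hr.1, hr.2]
    rw [Phi, ind_of hIcc, mul_one, abs_mul]
    calc |q.1| * |ind (if q.2.1 = 1 then q.2.2 ≤ v.1 else v.1 < q.2.2) * ind (v.2 = 0)
        - (1 - p) * (if q.2.1 = 1 then 1 - q.2.2 else q.2.2)| ≤ 1 * 1 :=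
          mul_le_mul hq h2 (abs_nonneg _) zero_le_one
      _ = 1 := by ring
  · rw [Phi, ind_of_not hIcc]
    simp

lemma abs_DD_le_one {κ p α : ℝ} (hκ0 : 0 < κ) (hp0 : 0 ≤ p) (hp1 : p ≤ 1)
    (env : ℤ → ℝ) (U ξ Y : ℕ → ℝ) (k : ℕ) : |DD κ p α env U ξ Y k| ≤ 1 :=
  Phi_abs_le hκ0 hp0 hp1 (by simpa [Qp] using abs_ind_le_one (P := pairE α env U ξ Y k)) _

lemma walkI_succ (env : ℤ → ℝ) (U : ℕ → ℝ) (n : ℕ) :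
    walkI env U (n + 1) = walkI env U n + if U n < env (walkI env U n) then 1 else -1 := rfl

lemma walkI_mem (env : ℤ → ℝ) (U : ℕ → ℝ) (n : ℕ) :
    walkI env U n ∈ Finset.Icc (-(n : ℤ)) n := by
  induction n with
  | zero => simp [walkI]
  | succ n ih =>
    simp only [Finset.mem_Icc] at ih ⊢
    rw [walkI_succ]
    push_cast
    split <;> omega

/-- The key pointwise inequality. -/
lemma key_pointwise {κ p α : ℝ} (hκ0 : 0 < κ) (hp0 : 0 ≤ p) (hp1 : p ≤ 1)
    {env : ℤ → ℝ} {U ξ Y : ℕ → ℝ}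
    (henv : ∀ z, env z ∈ Set.Ioo κ (1 - κ))
    (hξ : ∀ n, ξ n = 0 ∨ ξ n = 1) (hY : ∀ n, Y n ≠ α) (k : ℕ) :
    DD κ p α env U ξ Y k + (1 - p) * κ * ind (pairE α env U ξ Y k)
      ≤ ind (obsI env U ξ Y k = α ∧ obsI env U ξ Y (k + 1) = α ∧
          obsI env U ξ Y (k + 2) = α) := by
  have haIoo := henv (walkI env U (k + 1))
  have haIcc : env (walkI env U (k + 1)) ∈ Set.Icc κ (1 - κ) :=
    ⟨le_of_lt haIoo.1, le_of_lt haIoo.2⟩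
  by_cases hpair : pairE α env U ξ Y k
  swap
  · have hDD : DD κ p α env U ξ Y k = 0 := by
      rw [DD, Phi, Qp]; simp only; rw [ind_of_not hpair]; ring
    rw [hDD, ind_of_not hpair]
    simpa using ind_nonneg
  -- the observations at k, k+1 are uncorrupted
  have hclean : ∀ m, obsI env U ξ Y m = α → ξ m = 0 ∧ env (walkI env U m) = α := by
    intro m hm
    rcases hξ m with h0 | h1
    · refine ⟨h0, ?_⟩
      rw [obsI, h0] at hm; linarith [hm]
    · exfalso; rw [obsI, h1] at hm
      simp at hm
      exact hY m hm
  obtain ⟨hξk, henvk⟩ := hclean k hpair.1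
  obtain ⟨hξk1, henvk1⟩ := hclean (k + 1) hpair.2
  have hstep1 : walkI env U (k + 1)
      = walkI env U k + if U k < env (walkI env U k) then 1 else -1 := rfl
  have hstep2 : walkI env U (k + 2)
      = walkI env U (k + 1) + if U (k + 1) < env (walkI env U (k + 1)) then 1 else -1 := rfl
  by_cases hU : U k < env (walkI env U k)
  · have hup : walkI env U (k + 1) = walkI env U k + 1 := by rw [hstep1, if_pos hU]
    have hd : walkI env U k < walkI env U (k + 1) := by rw [hup]; omega
    have hDD : DD κ p α env U ξ Y k =
        ind (env (walkI env U (k + 1)) ≤ U (k + 1)) * ind (ξ (k + 2) = 0)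
          - (1 - p) * (1 - env (walkI env U (k + 1))) := by
      rw [DD, Phi, Qp]
      simp only [ind_of hpair, ind_of haIcc, ind_of hd]
      norm_num
    rw [hDD, ind_of hpair]
    have hprod : ind (env (walkI env U (k + 1)) ≤ U (k + 1)) * ind (ξ (k + 2) = 0)
        ≤ ind (obsI env U ξ Y k = α ∧ obsI env U ξ Y (k + 1) = α ∧
            obsI env U ξ Y (k + 2) = α) := by
      by_cases hc : env (walkI env U (k + 1)) ≤ U (k + 1)
      · by_cases hx : ξ (k + 2) = 0
        · have hX : walkI env U (k + 2) = walkI env U k := by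
            rw [hstep2, if_neg (not_lt.2 hc), hup]; ring
          have htr : obsI env U ξ Y (k + 2) = α := by
            rw [obsI, hx, hX, henvk]; ring
          rw [ind_of hc, ind_of hx, ind_of ⟨hpair.1, hpair.2, htr⟩]; norm_num
        · rw [ind_of_not hx, mul_zero]; exact ind_nonneg
      · rw [ind_of_not hc, zero_mul]; exact ind_nonneg
    nlinarith [haIoo.2]
  · have hdown : walkI env U (k + 1) = walkI env U k - 1 := by
      rw [hstep1, if_neg hU]; ring
    have hd : ¬ (walkI env U k < walkI env U (k + 1)) := by rw [hdown]; omega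
    have hDD : DD κ p α env U ξ Y k =
        ind (U (k + 1) < env (walkI env U (k + 1))) * ind (ξ (k + 2) = 0)
          - (1 - p) * env (walkI env U (k + 1)) := by
      rw [DD, Phi, Qp]
      simp only [ind_of hpair, ind_of haIcc, ind_of_not hd]
      norm_num
    rw [hDD, ind_of hpair]
    have hprod : ind (U (k + 1) < env (walkI env U (k + 1))) * ind (ξ (k + 2) = 0)
        ≤ ind (obsI env U ξ Y k = α ∧ obsI env U ξ Y (k + 1) = α ∧
            obsI env U ξ Y (k + 2) = α) := by
      by_cases hc : U (k + 1) < env (walkI env U (k + 1))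
      · by_cases hx : ξ (k + 2) = 0
        · have hX : walkI env U (k + 2) = walkI env U k := by
            rw [hstep2, if_pos hc, hdown]; ring
          have htr : obsI env U ξ Y (k + 2) = α := by
            rw [obsI, hx, hX, henvk]; ring
          rw [ind_of hc, ind_of hx, ind_of ⟨hpair.1, hpair.2, htr⟩]; norm_num
        · rw [ind_of_not hx, mul_zero]; exact ind_nonneg
      · rw [ind_of_not hc, zero_mul]; exact ind_nonneg
    nlinarith [haIoo.1]

lemma measurable_ind {δ : Type*} [MeasurableSpace δ] {P : δ → Prop}
    (hs : MeasurableSet {x | P x}) : Measurable (fun x => ind (P x)) := by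
  have : (fun x => ind (P x)) = Set.indicator {x | P x} (fun _ => (1:ℝ)) := by
    ext x; by_cases hx : P x <;> simp [ind, hx, Set.indicator_apply, Set.mem_setOf_eq]
  rw [this]; exact measurable_const.indicator hs

lemma integrable_bdd {δ : Type*} [MeasurableSpace δ] {μ : Measure δ} [IsFiniteMeasure μ]
    {f : δ → ℝ} (hf : Measurable f) (C : ℝ) (h : ∀ x, |f x| ≤ C) : Integrable f μ :=
  Integrable.mono' (integrable_const C) hf.aestronglyMeasurable
    (ae_of_all _ fun x => by simpa using h x)

lemma unif_prob : IsProbabilityMeasure unif := by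
  constructor
  rw [unif, Measure.restrict_apply MeasurableSet.univ, Set.univ_inter, Real.volume_Icc]
  norm_num

lemma bern_prob {p : ℝ} (hp0 : 0 ≤ p) (hp1 : p ≤ 1) : IsProbabilityMeasure (bern p) := by
  constructor
  rw [bern]
  simp only [Measure.add_apply, Measure.smul_apply, smul_eq_mul, measure_univ, mul_one]
  rw [← ENNReal.ofReal_add (by linarith) hp0]
  norm_num

lemma integral_ind_bern {p : ℝ} (hp0 : 0 ≤ p) (hp1 : p < 1) :
    ∫ x, ind (x = 0) ∂(bern p) = 1 - p := by
  have hmeas : Measurable (fun x : ℝ => ind (x = 0)) :=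
    measurable_ind (by simpa using (measurableSet_singleton (0:ℝ)))
  have hint : ∀ (m : Measure ℝ) [IsFiniteMeasure m], Integrable (fun x : ℝ => ind (x = 0)) m :=
    fun m _ => integrable_bdd hmeas 1 fun x => abs_ind_le_one
  rw [bern, integral_add_measure ?h1 ?h2]
  case h1 =>
    refine (integrable_smul_measure (by simp only [ne_eq, ENNReal.ofReal_eq_zero, not_le]; linarith) ENNReal.ofReal_ne_top).2 (hint _)
  case h2 =>
    rcases eq_or_lt_of_le hp0 with h | h
    · simp [← h]
    · exact (integrable_smul_measure (by simp [h]) ENNReal.ofReal_ne_top).2 (hint _)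
  rw [integral_smul_measure, integral_smul_measure, integral_dirac, integral_dirac]
  rw [ind_of rfl, ind_of_not (by norm_num : ¬ (1:ℝ) = 0)]
  rw [ENNReal.toReal_ofReal (by linarith : (0:ℝ) ≤ 1 - p), ENNReal.toReal_ofReal hp0]
  simp

lemma integral_ind_ge_unif {a : ℝ} (ha0 : 0 ≤ a) (ha1 : a ≤ 1) :
    ∫ u, ind (a ≤ u) ∂unif = 1 - a := by
  have : (fun u : ℝ => ind (a ≤ u)) = Set.indicator (Set.Ici a) (fun _ => (1:ℝ)) := by
    ext u; by_cases h : a ≤ u <;> simp [ind, h, Set.indicator_apply]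
  rw [this, integral_indicator_const _ measurableSet_Ici, unif, measureReal_def,
    Measure.restrict_apply measurableSet_Ici]
  have hs : Set.Ici a ∩ Set.Icc 0 1 = Set.Icc a 1 := by
    ext x; simp only [Set.mem_inter_iff, Set.mem_Ici, Set.mem_Icc]
    constructor
    · rintro ⟨h1, _, h3⟩; exact ⟨h1, h3⟩
    · rintro ⟨h1, h2⟩; exact ⟨h1, le_trans ha0 h1, h2⟩
  rw [hs, Real.volume_Icc, ENNReal.toReal_ofReal (by linarith)]
  simp

lemma integral_ind_lt_unif {a : ℝ} (ha0 : 0 ≤ a) (ha1 : a ≤ 1) :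
    ∫ u, ind (u < a) ∂unif = a := by
  have : (fun u : ℝ => ind (u < a)) = Set.indicator (Set.Iio a) (fun _ => (1:ℝ)) := by
    ext u; by_cases h : u < a <;> simp [ind, h, Set.indicator_apply]
  rw [this, integral_indicator_const _ measurableSet_Iio, unif, measureReal_def,
    Measure.restrict_apply measurableSet_Iio]
  have hs : Set.Iio a ∩ Set.Icc 0 1 = Set.Ico 0 a := by
    ext x; simp only [Set.mem_inter_iff, Set.mem_Iio, Set.mem_Icc, Set.mem_Ico]
    constructor
    · rintro ⟨h1, h2, _⟩; exact ⟨h2, h1⟩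
    · rintro ⟨h1, h2⟩; exact ⟨h2, h1, le_trans (le_of_lt h2) ha1⟩
  rw [hs, Real.volume_Ico, ENNReal.toReal_ofReal (by linarith)]
  simp

/-- The inner integral of `Φ` w.r.t. the law of `(U(k+1), ξ(k+2))` vanishes. -/
lemma integral_Phi {κ p : ℝ} (hκ0 : 0 < κ) (hκh : κ < 1/2) (hp0 : 0 ≤ p) (hp1 : p < 1)
    (q : ℝ × ℝ × ℝ) : ∫ v, Phi κ p q v ∂(unif.prod (bern p)) = 0 := by
  haveI := unif_prob
  haveI := bern_prob hp0 (le_of_lt hp1)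
  by_cases hIcc : q.2.2 ∈ Set.Icc κ (1 - κ)
  swap
  · simp only [Phi, ind_of_not hIcc, mul_zero, zero_mul]
    exact integral_zero _ _
  have ha0 : 0 ≤ q.2.2 := le_trans (le_of_lt hκ0) hIcc.1
  have ha1 : q.2.2 ≤ 1 := le_trans hIcc.2 (by linarith)
  have hmg2 : Measurable (fun x : ℝ => ind (x = 0)) :=
    measurable_ind (by simpa using (measurableSet_singleton (0:ℝ)))
  by_cases hd : q.2.1 = 1
  · have hPhi : (fun v : ℝ × ℝ => Phi κ p q v) =
        fun v => q.1 * (ind (q.2.2 ≤ v.1) * ind (v.2 = 0))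
          - q.1 * ((1 - p) * (1 - q.2.2)) := by
      ext v; rw [Phi, ind_of hIcc, if_pos hd, if_pos hd]; ring
    rw [hPhi, integral_sub, integral_const_mul, integral_const_mul, integral_prod_mul (f := fun u => ind (q.2.2 ≤ u)) (g := fun x => ind (x = 0)),
      integral_ind_ge_unif ha0 ha1, integral_ind_bern hp0 hp1, integral_const]
    · simp only [measure_univ, probReal_univ, ENNReal.toReal_one, smul_eq_mul, one_mul]; ring
    · refine Integrable.const_mul ?_ _
      refine integrable_bdd ?_ 1 ?_
      · exact ((measurable_ind measurableSet_Ici).comp measurable_fst).mul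
          (hmg2.comp measurable_snd)
      · intro v
        rw [abs_mul]
        calc |ind (q.2.2 ≤ v.1)| * |ind (v.2 = 0)| ≤ 1 * 1 :=
            mul_le_mul abs_ind_le_one abs_ind_le_one (abs_nonneg _) zero_le_one
          _ = 1 := by ring
    · exact integrable_const _
  · have hPhi : (fun v : ℝ × ℝ => Phi κ p q v) =
        fun v => q.1 * (ind (v.1 < q.2.2) * ind (v.2 = 0))
          - q.1 * ((1 - p) * q.2.2) := by
      ext v; rw [Phi, ind_of hIcc, if_neg hd, if_neg hd]; ring
    rw [hPhi, integral_sub, integral_const_mul, integral_const_mul, integral_prod_mul (f := fun u => ind (u < q.2.2)) (g := fun x => ind (x = 0)),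
      integral_ind_lt_unif ha0 ha1, integral_ind_bern hp0 hp1, integral_const]
    · simp only [measure_univ, probReal_univ, ENNReal.toReal_one, smul_eq_mul, one_mul]; ring
    · refine Integrable.const_mul ?_ _
      refine integrable_bdd ?_ 1 ?_
      · exact ((measurable_ind measurableSet_Iio).comp measurable_fst).mul
          (hmg2.comp measurable_snd)
      · intro v
        rw [abs_mul]
        calc |ind (v.1 < q.2.2)| * |ind (v.2 = 0)| ≤ 1 * 1 :=
            mul_le_mul abs_ind_le_one abs_ind_le_one (abs_nonneg _) zero_le_one
          _ = 1 := by ring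
    · exact integrable_const _

section Meas

variable {Ω : Type} {m : MeasurableSpace Ω} {env : Ω → ℤ → ℝ} {U ξ Y : Ω → ℕ → ℝ}

lemma meas_walkI (n : ℕ) (henv : ∀ z, Measurable[m] (fun w => env w z))
    (hU : ∀ i, i < n → Measurable[m] (fun w => U w i)) :
    Measurable[m] (fun w => walkI (env w) (U w) n) := by
  induction n with
  | zero => simpa [walkI] using measurable_const
  | succ n ih =>
    have hw := ih (fun i hi => hU i (Nat.lt_succ_of_lt hi))
    have henvX : Measurable[m] (fun w => env w (walkI (env w) (U w) n)) := by
      have heq : (fun w => env w (walkI (env w) (U w) n))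
          = fun w => ∑ z ∈ Finset.Icc (-(n:ℤ)) n,
              if walkI (env w) (U w) n = z then env w z else 0 := by
        ext w
        rw [Finset.sum_ite_eq (Finset.Icc (-(n:ℤ)) n) (walkI (env w) (U w) n) (fun z => env w z),
          if_pos (walkI_mem (env w) (U w) n)]
      rw [heq]
      refine Finset.measurable_sum _ (fun z _ => ?_)
      exact Measurable.ite (hw (measurableSet_singleton z)) (henv z) measurable_const
    have : (fun w => walkI (env w) (U w) (n + 1))
        = fun w => walkI (env w) (U w) n
            + if U w n < env w (walkI (env w) (U w) n) then 1 else -1 := by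
      ext w; exact walkI_succ (env w) (U w) n
    rw [this]
    exact hw.add (Measurable.ite (measurableSet_lt (hU n n.lt_succ_self) henvX)
      measurable_const measurable_const)

lemma meas_envWalk (n : ℕ) (henv : ∀ z, Measurable[m] (fun w => env w z))
    (hU : ∀ i, i < n → Measurable[m] (fun w => U w i)) :
    Measurable[m] (fun w => env w (walkI (env w) (U w) n)) := by
  have heq : (fun w => env w (walkI (env w) (U w) n))
      = fun w => ∑ z ∈ Finset.Icc (-(n:ℤ)) n,
          if walkI (env w) (U w) n = z then env w z else 0 := by
    ext w
    rw [Finset.sum_ite_eq (Finset.Icc (-(n:ℤ)) n) (walkI (env w) (U w) n) (fun z => env w z),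
      if_pos (walkI_mem (env w) (U w) n)]
  rw [heq]
  refine Finset.measurable_sum _ (fun z _ => ?_)
  exact Measurable.ite ((meas_walkI n henv hU) (measurableSet_singleton z)) (henv z)
    measurable_const

lemma meas_obsI (n : ℕ) (henv : ∀ z, Measurable[m] (fun w => env w z))
    (hU : ∀ i, i < n → Measurable[m] (fun w => U w i))
    (hξ : Measurable[m] (fun w => ξ w n)) (hY : Measurable[m] (fun w => Y w n)) :
    Measurable[m] (fun w => obsI (env w) (U w) (ξ w) (Y w) n) := by
  have : (fun w => obsI (env w) (U w) (ξ w) (Y w) n)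
      = fun w => env w (walkI (env w) (U w) n) * (1 - ξ w n) + Y w n * ξ w n := rfl
  rw [this]
  exact ((meas_envWalk n henv hU).mul (measurable_const.sub hξ)).add (hY.mul hξ)

lemma meas_pairE (α : ℝ) (k : ℕ) (henv : ∀ z, Measurable[m] (fun w => env w z))
    (hU : ∀ i, i ≤ k → Measurable[m] (fun w => U w i))
    (hξ : ∀ i, i ≤ k + 1 → Measurable[m] (fun w => ξ w i))
    (hY : ∀ i, i ≤ k + 1 → Measurable[m] (fun w => Y w i)) :
    MeasurableSet[m] {w | pairE α (env w) (U w) (ξ w) (Y w) k} := by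
  have h1 : MeasurableSet[m] {w | obsI (env w) (U w) (ξ w) (Y w) k = α} :=
    measurableSet_eq_fun
      (meas_obsI k henv (fun i hi => hU i (le_of_lt hi)) (hξ k (by omega)) (hY k (by omega)))
      measurable_const
  have h2 : MeasurableSet[m] {w | obsI (env w) (U w) (ξ w) (Y w) (k+1) = α} :=
    measurableSet_eq_fun
      (meas_obsI (k+1) henv (fun i hi => hU i (by omega)) (hξ (k+1) (by omega))
        (hY (k+1) (by omega)))
      measurable_const
  have : {w | pairE α (env w) (U w) (ξ w) (Y w) k}
      = {w | obsI (env w) (U w) (ξ w) (Y w) k = α}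
        ∩ {w | obsI (env w) (U w) (ξ w) (Y w) (k+1) = α} := rfl
  rw [this]; exact h1.inter h2

lemma meas_Qp (α : ℝ) (k : ℕ) (henv : ∀ z, Measurable[m] (fun w => env w z))
    (hU : ∀ i, i ≤ k → Measurable[m] (fun w => U w i))
    (hξ : ∀ i, i ≤ k + 1 → Measurable[m] (fun w => ξ w i))
    (hY : ∀ i, i ≤ k + 1 → Measurable[m] (fun w => Y w i)) :
    Measurable[m] (fun w => Qp α (env w) (U w) (ξ w) (Y w) k) := by
  refine Measurable.prodMk ?_ (Measurable.prodMk ?_ ?_)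
  · exact measurable_ind (meas_pairE α k henv hU hξ hY)
  · refine measurable_ind (measurableSet_lt ?_ ?_)
    · exact meas_walkI k henv (fun i hi => hU i (le_of_lt hi))
    · exact meas_walkI (k+1) henv (fun i hi => hU i (by omega))
  · exact meas_envWalk (k+1) henv (fun i hi => hU i (by omega))

lemma meas_Phi (κ p : ℝ) :
    Measurable (fun z : (ℝ × ℝ × ℝ) × (ℝ × ℝ) => Phi κ p z.1 z.2) := by
  have hh : Measurable (fun z : (ℝ × ℝ × ℝ) × (ℝ × ℝ) => z.1.1) := measurable_fst.fst
  have hd : Measurable (fun z : (ℝ × ℝ × ℝ) × (ℝ × ℝ) => z.1.2.1) := measurable_fst.snd.fst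
  have ha : Measurable (fun z : (ℝ × ℝ × ℝ) × (ℝ × ℝ) => z.1.2.2) := measurable_fst.snd.snd
  have hu : Measurable (fun z : (ℝ × ℝ × ℝ) × (ℝ × ℝ) => z.2.1) := measurable_snd.fst
  have hx : Measurable (fun z : (ℝ × ℝ × ℝ) × (ℝ × ℝ) => z.2.2) := measurable_snd.snd
  have hdset : MeasurableSet {z : (ℝ × ℝ × ℝ) × (ℝ × ℝ) | z.1.2.1 = 1} :=
    measurableSet_eq_fun hd measurable_const
  have h1 : Measurable (fun z : (ℝ × ℝ × ℝ) × (ℝ × ℝ) => ind (z.1.2.2 ∈ Set.Icc κ (1 - κ))) := by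
    refine measurable_ind ?_
    exact ha measurableSet_Icc
  have h2 : Measurable (fun z : (ℝ × ℝ × ℝ) × (ℝ × ℝ) =>
      ind (if z.1.2.1 = 1 then z.1.2.2 ≤ z.2.1 else z.2.1 < z.1.2.2)) := by
    have heq : (fun z : (ℝ × ℝ × ℝ) × (ℝ × ℝ) =>
        ind (if z.1.2.1 = 1 then z.1.2.2 ≤ z.2.1 else z.2.1 < z.1.2.2))
        = fun z => if z.1.2.1 = 1 then ind (z.1.2.2 ≤ z.2.1) else ind (z.2.1 < z.1.2.2) := by
      ext z; by_cases h : z.1.2.1 = 1 <;> simp [h]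
    rw [heq]
    exact Measurable.ite hdset (measurable_ind (measurableSet_le ha hu))
      (measurable_ind (measurableSet_lt hu ha))
  have h3 : Measurable (fun z : (ℝ × ℝ × ℝ) × (ℝ × ℝ) => ind (z.2.2 = 0)) :=
    measurable_ind (measurableSet_eq_fun hx measurable_const)
  have h4 : Measurable (fun z : (ℝ × ℝ × ℝ) × (ℝ × ℝ) =>
      if z.1.2.1 = 1 then 1 - z.1.2.2 else z.1.2.2) :=
    Measurable.ite hdset (measurable_const.sub ha) ha
  exact ((hh.mul h1).mul ((h2.mul h3).sub (measurable_const.mul h4)))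

lemma meas_DD (κ p α : ℝ) (j : ℕ) (henv : ∀ z, Measurable[m] (fun w => env w z))
    (hU : ∀ i, i ≤ j + 1 → Measurable[m] (fun w => U w i))
    (hξ : ∀ i, i ≤ j + 2 → Measurable[m] (fun w => ξ w i))
    (hY : ∀ i, i ≤ j + 1 → Measurable[m] (fun w => Y w i)) :
    Measurable[m] (fun w => DD κ p α (env w) (U w) (ξ w) (Y w) j) := by
  have : (fun w => DD κ p α (env w) (U w) (ξ w) (Y w) j)
      = (fun z : (ℝ × ℝ × ℝ) × (ℝ × ℝ) => Phi κ p z.1 z.2)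
        ∘ (fun w => (Qp α (env w) (U w) (ξ w) (Y w) j, (U w (j+1), ξ w (j+2)))) := rfl
  rw [this]
  refine (meas_Phi κ p).comp ?_
  refine Measurable.prodMk
    (meas_Qp α j henv (fun i hi => hU i (by omega)) (fun i hi => hξ i (by omega))
      (fun i hi => hY i (by omega))) ?_
  exact (hU (j+1) (by omega)).prodMk (hξ (j+2) (by omega))

lemma meas_Gpair (κ p α : ℝ) (j k : ℕ) (hjk : j < k)
    (henv : ∀ z, Measurable[m] (fun w => env w z))
    (hU : ∀ i, i ≤ k → Measurable[m] (fun w => U w i))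
    (hξ : ∀ i, i ≤ k + 1 → Measurable[m] (fun w => ξ w i))
    (hY : ∀ i, i ≤ k + 1 → Measurable[m] (fun w => Y w i)) :
    Measurable[m] (fun w =>
      ((DD κ p α (env w) (U w) (ξ w) (Y w) j * ind (pairE α (env w) (U w) (ξ w) (Y w) k),
        ind (walkI (env w) (U w) k < walkI (env w) (U w) (k+1)),
        env w (walkI (env w) (U w) (k+1))) : ℝ × ℝ × ℝ)) := by
  refine Measurable.prodMk (Measurable.mul ?_ ?_) (Measurable.prodMk ?_ ?_)
  · exact meas_DD κ p α j henv (fun i hi => hU i (by omega)) (fun i hi => hξ i (by omega))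
      (fun i hi => hY i (by omega))
  · exact measurable_ind (meas_pairE α k henv hU hξ hY)
  · refine measurable_ind (measurableSet_lt ?_ ?_)
    · exact meas_walkI k henv (fun i hi => hU i (by omega))
    · exact meas_walkI (k+1) henv (fun i hi => hU i (by omega))
  · exact meas_envWalk (k+1) henv (fun i hi => hU i (by omega))

end Meas

section Expect

variable {Ω : Type} [mΩ : MeasurableSpace Ω] {μ : Measure Ω}
  {κ : ℝ} {ρ ν : Measure ℝ} {p : ℝ}
  {env : Ω → ℤ → ℝ} {U ξ Y : Ω → ℕ → ℝ}

/-- The index set of the two "fresh" coordinates `U (k+1)` and `ξ (k+2)`. -/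
def freshS (k : ℕ) : Set (ℤ ⊕ (ℕ ⊕ (ℕ ⊕ ℕ))) :=
  {Sum.inr (Sum.inl (k+1)), Sum.inr (Sum.inr (Sum.inl (k+2)))}

/-- The σ-algebra generated by all coordinates except `U (k+1)`, `ξ (k+2)`. -/
def MK (env : Ω → ℤ → ℝ) (U ξ Y : Ω → ℕ → ℝ) (k : ℕ) : MeasurableSpace Ω :=
  ⨆ i ∈ (freshS k)ᶜ, MeasurableSpace.comap (family env U ξ Y i) inferInstance

lemma coord_meas_MK (k : ℕ) {i : ℤ ⊕ (ℕ ⊕ (ℕ ⊕ ℕ))} (hi : i ∈ (freshS k)ᶜ) :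
    Measurable[MK env U ξ Y k] (family env U ξ Y i) := by
  rw [measurable_iff_comap_le]
  exact le_biSup (fun i => MeasurableSpace.comap (family env U ξ Y i) inferInstance) hi

lemma MK_env (k : ℕ) (z : ℤ) : Measurable[MK env U ξ Y k] (fun w => env w z) :=
  coord_meas_MK k (i := Sum.inl z) (by simp [freshS])

lemma MK_U (k : ℕ) {i : ℕ} (hi : i ≠ k + 1) : Measurable[MK env U ξ Y k] (fun w => U w i) :=
  coord_meas_MK k (i := Sum.inr (Sum.inl i)) (by simp [freshS, hi])

lemma MK_ξ (k : ℕ) {i : ℕ} (hi : i ≠ k + 2) : Measurable[MK env U ξ Y k] (fun w => ξ w i) :=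
  coord_meas_MK k (i := Sum.inr (Sum.inr (Sum.inl i))) (by simp [freshS, hi])

lemma MK_Y (k : ℕ) (i : ℕ) : Measurable[MK env U ξ Y k] (fun w => Y w i) :=
  coord_meas_MK k (i := Sum.inr (Sum.inr (Sum.inr i))) (by simp [freshS])

/-- Expectation of `Φ` applied to an `MK`-measurable triple and the fresh pair vanishes. -/
lemma expectation_Phi_zero (hsetup : SetupI μ κ ρ ν p env U ξ Y)
    (hκ0 : 0 < κ) (hκh : κ < 1/2) (hp0 : 0 ≤ p) (hp1 : p < 1) (k : ℕ)
    (G : Ω → ℝ × ℝ × ℝ) (hG : Measurable[MK env U ξ Y k] G) (hGb : ∀ w, |(G w).1| ≤ 1) :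
    ∫ w, Phi κ p (G w) (U w (k+1), ξ w (k+2)) ∂μ = 0 := by
  haveI := hsetup.probμ
  haveI := unif_prob
  haveI := bern_prob hp0 (le_of_lt hp1)
  set i1 : ℤ ⊕ (ℕ ⊕ (ℕ ⊕ ℕ)) := Sum.inr (Sum.inl (k+1)) with hi1
  set i2 : ℤ ⊕ (ℕ ⊕ (ℕ ⊕ ℕ)) := Sum.inr (Sum.inr (Sum.inl (k+2))) with hi2
  have h_le : ∀ i, MeasurableSpace.comap (family env U ξ Y i) inferInstance ≤ mΩ :=
    fun i => (hsetup.meas i).comap_le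
  have hIndep : Indep (MK env U ξ Y k) (⨆ i ∈ freshS k, MeasurableSpace.comap
      (family env U ξ Y i) inferInstance) μ := by
    have h := ProbabilityTheory.indep_biSup_compl h_le hsetup.indep (freshS k)ᶜ
    unfold MK
    rwa [compl_compl] at h
  set P : Ω → ℝ × ℝ := fun w => (U w (k+1), ξ w (k+2)) with hP
  have hP_NS : Measurable[⨆ i ∈ freshS k, MeasurableSpace.comap
      (family env U ξ Y i) inferInstance] P := by
    refine Measurable.prodMk ?_ ?_
    · rw [measurable_iff_comap_le]
      exact le_biSup (fun i => MeasurableSpace.comap (family env U ξ Y i) inferInstance)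
        (show i1 ∈ freshS k by simp [freshS, hi1])
    · rw [measurable_iff_comap_le]
      exact le_biSup (fun i => MeasurableSpace.comap (family env U ξ Y i) inferInstance)
        (show i2 ∈ freshS k by simp [freshS, hi2])
  have hGP : IndepFun G P μ := by
    rw [IndepFun_iff_Indep]
    exact indep_of_indep_of_le_right
      (indep_of_indep_of_le_left hIndep (measurable_iff_comap_le.1 hG))
      (measurable_iff_comap_le.1 hP_NS)
  have hMle : MK env U ξ Y k ≤ mΩ := iSup₂_le fun i _ => h_le i
  have hGm : Measurable G := hG.mono hMle le_rfl
  have hPm : Measurable P := (hsetup.meas i1).prodMk (hsetup.meas i2)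
  have hmapP : μ.map P = unif.prod (bern p) := by
    have hind : IndepFun (family env U ξ Y i1) (family env U ξ Y i2) μ :=
      hsetup.indep.indepFun (by simp [hi1, hi2])
    have := (indepFun_iff_map_prod_eq_prod_map_map (hsetup.meas i1).aemeasurable
      (hsetup.meas i2).aemeasurable).1 hind
    rw [hP]
    calc μ.map (fun w => (U w (k+1), ξ w (k+2)))
        = (μ.map (family env U ξ Y i1)).prod (μ.map (family env U ξ Y i2)) := this
      _ = unif.prod (bern p) := by
          rw [show μ.map (family env U ξ Y i1) = unif from hsetup.lawU (k+1),
            show μ.map (family env U ξ Y i2) = bern p from hsetup.lawξ (k+2)]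
  have hmapGP : μ.map (fun w => (G w, P w)) = (μ.map G).prod (unif.prod (bern p)) := by
    rw [← hmapP]
    exact (indepFun_iff_map_prod_eq_prod_map_map hGm.aemeasurable hPm.aemeasurable).1 hGP
  haveI : IsProbabilityMeasure (μ.map G) := Measure.isProbabilityMeasure_map hGm.aemeasurable
  have hPhiM : Measurable (fun z : (ℝ × ℝ × ℝ) × (ℝ × ℝ) => Phi κ p z.1 z.2) := meas_Phi κ p
  -- integrability on the product
  have hbad : (μ.map G) {q : ℝ × ℝ × ℝ | ¬ |q.1| ≤ 1} = 0 := by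
    rw [Measure.map_apply hGm]
    · have : (fun w => G w) ⁻¹' {q : ℝ × ℝ × ℝ | ¬ |q.1| ≤ 1} = ∅ := by
        ext w; simp [hGb w]
      rw [this]; simp
    · exact measurable_fst.abs measurableSet_Iic |>.compl
  have hae : ∀ᵐ z ∂((μ.map G).prod (unif.prod (bern p))),
      ‖Phi κ p z.1 z.2‖ ≤ 1 := by
    have hset : {z : (ℝ × ℝ × ℝ) × (ℝ × ℝ) | ¬ |z.1.1| ≤ 1}
        = {q : ℝ × ℝ × ℝ | ¬ |q.1| ≤ 1} ×ˢ (Set.univ : Set (ℝ × ℝ)) := by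
      ext z; simp
    have hz : ((μ.map G).prod (unif.prod (bern p))) {z : (ℝ × ℝ × ℝ) × (ℝ × ℝ) | ¬ |z.1.1| ≤ 1}
        = 0 := by
      rw [hset, Measure.prod_prod, hbad, zero_mul]
    have h1 : ∀ᵐ z ∂((μ.map G).prod (unif.prod (bern p))), |z.1.1| ≤ 1 := by
      rw [ae_iff]; exact hz
    filter_upwards [h1] with z hz1
    rw [Real.norm_eq_abs]
    exact Phi_abs_le hκ0 hp0 (le_of_lt hp1) hz1 z.2
  have hInt : Integrable (fun z : (ℝ × ℝ × ℝ) × (ℝ × ℝ) => Phi κ p z.1 z.2)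
      ((μ.map G).prod (unif.prod (bern p))) :=
    Integrable.mono' (integrable_const 1) hPhiM.aestronglyMeasurable hae
  calc ∫ w, Phi κ p (G w) (P w) ∂μ
      = ∫ z : (ℝ × ℝ × ℝ) × (ℝ × ℝ), Phi κ p z.1 z.2 ∂(μ.map (fun w => (G w, P w))) :=
        (integral_map (hGm.prodMk hPm).aemeasurable hPhiM.aestronglyMeasurable).symm
    _ = ∫ z : (ℝ × ℝ × ℝ) × (ℝ × ℝ), Phi κ p z.1 z.2
          ∂((μ.map G).prod (unif.prod (bern p))) := by rw [hmapGP]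
    _ = ∫ q, (∫ v, Phi κ p q v ∂(unif.prod (bern p))) ∂(μ.map G) := integral_prod _ hInt
    _ = 0 := by
        have : ∀ q : ℝ × ℝ × ℝ, (∫ v, Phi κ p q v ∂(unif.prod (bern p))) = 0 :=
          integral_Phi hκ0 hκh hp0 hp1
        simp [this]

end Expect

section Moments

variable {Ω : Type} [mΩ : MeasurableSpace Ω] {μ : Measure Ω}
  {κ : ℝ} {ρ ν : Measure ℝ} {p : ℝ}
  {env : Ω → ℤ → ℝ} {U ξ Y : Ω → ℕ → ℝ}

lemma expectation_DD_zero (hsetup : SetupI μ κ ρ ν p env U ξ Y)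
    (hκ0 : 0 < κ) (hκh : κ < 1/2) (hp0 : 0 ≤ p) (hp1 : p < 1) (α : ℝ) (k : ℕ) :
    ∫ w, DD κ p α (env w) (U w) (ξ w) (Y w) k ∂μ = 0 := by
  have h := expectation_Phi_zero hsetup hκ0 hκh hp0 hp1 k
    (fun w => Qp α (env w) (U w) (ξ w) (Y w) k)
    (meas_Qp α k (fun z => MK_env k z) (fun i hi => MK_U k (by omega))
      (fun i hi => MK_ξ k (by omega)) (fun i _ => MK_Y k i))
    (fun w => by simpa [Qp] using abs_ind_le_one (P := pairE α (env w) (U w) (ξ w) (Y w) k))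
  exact h

lemma expectation_DD_mul_zero (hsetup : SetupI μ κ ρ ν p env U ξ Y)
    (hκ0 : 0 < κ) (hκh : κ < 1/2) (hp0 : 0 ≤ p) (hp1 : p < 1) (α : ℝ) {j k : ℕ} (hjk : j < k) :
    ∫ w, DD κ p α (env w) (U w) (ξ w) (Y w) j * DD κ p α (env w) (U w) (ξ w) (Y w) k ∂μ = 0 := by
  set G : Ω → ℝ × ℝ × ℝ := fun w =>
    (DD κ p α (env w) (U w) (ξ w) (Y w) j * ind (pairE α (env w) (U w) (ξ w) (Y w) k),
     ind (walkI (env w) (U w) k < walkI (env w) (U w) (k+1)),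
     env w (walkI (env w) (U w) (k+1))) with hG_def
  have hGmeas : Measurable[MK env U ξ Y k] G :=
    meas_Gpair κ p α j k hjk (fun z => MK_env k z) (fun i hi => MK_U k (by omega))
      (fun i hi => MK_ξ k (by omega)) (fun i _ => MK_Y k i)
  have hGb : ∀ w, |(G w).1| ≤ 1 := by
    intro w
    rw [hG_def]
    simp only
    rw [abs_mul]
    calc |DD κ p α (env w) (U w) (ξ w) (Y w) j| * |ind (pairE α (env w) (U w) (ξ w) (Y w) k)|
        ≤ 1 * 1 := mul_le_mul (abs_DD_le_one hκ0 hp0 (le_of_lt hp1) _ _ _ _ _) abs_ind_le_one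
          (abs_nonneg _) zero_le_one
      _ = 1 := by ring
  have heq : (fun w => DD κ p α (env w) (U w) (ξ w) (Y w) j
      * DD κ p α (env w) (U w) (ξ w) (Y w) k)
      = fun w => Phi κ p (G w) (U w (k+1), ξ w (k+2)) := by
    ext w
    rw [hG_def]
    simp only [DD, Phi, Qp]
    ring
  rw [heq]
  exact expectation_Phi_zero hsetup hκ0 hκh hp0 hp1 k G hGmeas hGb

lemma meas_DD_amb (hsetup : SetupI μ κ ρ ν p env U ξ Y) (κ' p' α : ℝ) (k : ℕ) :
    Measurable (fun w => DD κ' p' α (env w) (U w) (ξ w) (Y w) k) :=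
  meas_DD κ' p' α k (fun z => hsetup.meas (Sum.inl z))
    (fun i _ => hsetup.meas (Sum.inr (Sum.inl i)))
    (fun i _ => hsetup.meas (Sum.inr (Sum.inr (Sum.inl i))))
    (fun i _ => hsetup.meas (Sum.inr (Sum.inr (Sum.inr i))))

/-- Second moment bound: `E[(∑_{k<n} D_k)²] ≤ n`. -/
lemma second_moment (hsetup : SetupI μ κ ρ ν p env U ξ Y)
    (hκ0 : 0 < κ) (hκh : κ < 1/2) (hp0 : 0 ≤ p) (hp1 : p < 1) (α : ℝ) (n : ℕ) :
    ∫ w, (∑ k ∈ Finset.range n, DD κ p α (env w) (U w) (ξ w) (Y w) k)^2 ∂μ ≤ n := by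
  haveI := hsetup.probμ
  have hDDm := fun k => meas_DD_amb hsetup κ p α k
  have hprod_int : ∀ j k : ℕ, Integrable (fun w => DD κ p α (env w) (U w) (ξ w) (Y w) j
      * DD κ p α (env w) (U w) (ξ w) (Y w) k) μ := by
    intro j k
    refine integrable_bdd ((hDDm j).mul (hDDm k)) 1 (fun w => ?_)
    rw [abs_mul]
    calc |DD κ p α (env w) (U w) (ξ w) (Y w) j| * |DD κ p α (env w) (U w) (ξ w) (Y w) k|
        ≤ 1 * 1 := mul_le_mul (abs_DD_le_one hκ0 hp0 (le_of_lt hp1) _ _ _ _ _)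
          (abs_DD_le_one hκ0 hp0 (le_of_lt hp1) _ _ _ _ _) (abs_nonneg _) zero_le_one
      _ = 1 := by ring
  have hexp : (fun w => (∑ k ∈ Finset.range n, DD κ p α (env w) (U w) (ξ w) (Y w) k)^2)
      = fun w => ∑ j ∈ Finset.range n, ∑ k ∈ Finset.range n,
          DD κ p α (env w) (U w) (ξ w) (Y w) j * DD κ p α (env w) (U w) (ξ w) (Y w) k := by
    ext w
    rw [sq, Finset.sum_mul_sum]
  rw [hexp, integral_finset_sum _ (fun j _ => integrable_finset_sum _ (fun k _ => hprod_int j k))]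
  have hinner : ∀ j ∈ Finset.range n,
      ∫ w, (∑ k ∈ Finset.range n, DD κ p α (env w) (U w) (ξ w) (Y w) j
        * DD κ p α (env w) (U w) (ξ w) (Y w) k) ∂μ ≤ 1 := by
    intro j hj
    rw [integral_finset_sum _ (fun k _ => hprod_int j k)]
    have hoff : ∀ k ∈ Finset.range n, k ≠ j →
        ∫ w, DD κ p α (env w) (U w) (ξ w) (Y w) j
          * DD κ p α (env w) (U w) (ξ w) (Y w) k ∂μ = 0 := by
      intro k _ hkj
      rcases lt_or_gt_of_ne (Ne.symm hkj) with h | h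
      · exact expectation_DD_mul_zero hsetup hκ0 hκh hp0 hp1 α h
      · have : (fun w => DD κ p α (env w) (U w) (ξ w) (Y w) j
            * DD κ p α (env w) (U w) (ξ w) (Y w) k)
            = fun w => DD κ p α (env w) (U w) (ξ w) (Y w) k
              * DD κ p α (env w) (U w) (ξ w) (Y w) j := by
          ext w; ring
        rw [this]
        exact expectation_DD_mul_zero hsetup hκ0 hκh hp0 hp1 α h
    rw [Finset.sum_eq_single_of_mem j hj hoff]
    calc ∫ w, DD κ p α (env w) (U w) (ξ w) (Y w) j
          * DD κ p α (env w) (U w) (ξ w) (Y w) j ∂μ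
        ≤ ∫ _, (1:ℝ) ∂μ := by
          refine integral_mono (hprod_int j j) (integrable_const 1) (fun w => ?_)
          have h := abs_DD_le_one hκ0 hp0 (le_of_lt hp1) (env w) (U w) (ξ w) (Y w) j
            (κ := κ) (p := p) (α := α)
          calc DD κ p α (env w) (U w) (ξ w) (Y w) j * DD κ p α (env w) (U w) (ξ w) (Y w) j
              = |DD κ p α (env w) (U w) (ξ w) (Y w) j|
                * |DD κ p α (env w) (U w) (ξ w) (Y w) j| := (abs_mul_abs_self _).symm
            _ ≤ 1 * 1 := mul_le_mul h h (abs_nonneg _) zero_le_one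
            _ = 1 := by ring
      _ = 1 := by simp
  calc ∑ j ∈ Finset.range n, ∫ w, (∑ k ∈ Finset.range n,
        DD κ p α (env w) (U w) (ξ w) (Y w) j * DD κ p α (env w) (U w) (ξ w) (Y w) k) ∂μ
      ≤ ∑ _j ∈ Finset.range n, (1:ℝ) := Finset.sum_le_sum hinner
    _ = n := by simp

end Moments

/-- Deterministic interpolation: convergence along squares plus bounded increments
gives convergence of the full sequence of averages. -/
lemma tendsto_div_of_sq (a : ℕ → ℝ) (ha : ∀ k, |a k| ≤ 1)
    (h : ∀ j : ℕ, ∀ᶠ m : ℕ in atTop,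
      |∑ k ∈ Finset.range ((m+1)^2), a k| ≤ ((m:ℝ)+1)^2 / ((j:ℝ)+1)) :
    Tendsto (fun n : ℕ => (∑ k ∈ Finset.range n, a k) / n) atTop (nhds 0) := by
  have key : ∀ j : ℕ, ∀ᶠ n : ℕ in atTop,
      |(∑ k ∈ Finset.range n, a k) / n| ≤ 3 / ((j:ℝ)+1) := by
    intro j
    obtain ⟨M, hM⟩ := eventually_atTop.1 (h j)
    refine eventually_atTop.2 ⟨(M + j + 2)^2, fun n hn => ?_⟩
    have hmN : M + j + 2 ≤ Nat.sqrt n := Nat.le_sqrt'.2 hn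
    obtain ⟨m', hm'⟩ := Nat.exists_eq_succ_of_ne_zero (show Nat.sqrt n ≠ 0 by omega)
    have hm'' : Nat.sqrt n = m' + 1 := by omega
    have hA : (m' + 1)^2 ≤ n := by rw [← hm'']; exact Nat.sqrt_le' n
    have hB : n < (m' + 2)^2 := by
      have h2 := Nat.lt_succ_sqrt' n
      rw [hm''] at h2
      simpa [Nat.succ_eq_add_one, show m'+1+1 = m'+2 from rfl] using h2
    have hC : M ≤ m' := by omega
    have hj1 : j + 1 ≤ m' + 1 := by omega
    have hS : |∑ k ∈ Finset.range ((m'+1)^2), a k| ≤ ((m':ℝ)+1)^2 / ((j:ℝ)+1) :=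
      hM m' hC
    have hsplit : ∑ k ∈ Finset.range ((m'+1)^2), a k
        + ∑ k ∈ Finset.Ico ((m'+1)^2) n, a k = ∑ k ∈ Finset.range n, a k :=
      Finset.sum_range_add_sum_Ico _ hA
    have hcard : |∑ k ∈ Finset.Ico ((m'+1)^2) n, a k| ≤ ((n - (m'+1)^2 : ℕ) : ℝ) := by
      calc |∑ k ∈ Finset.Ico ((m'+1)^2) n, a k| ≤ ∑ k ∈ Finset.Ico ((m'+1)^2) n, |a k| :=
            Finset.abs_sum_le_sum_abs _ _
        _ ≤ ∑ _k ∈ Finset.Ico ((m'+1)^2) n, (1:ℝ) := Finset.sum_le_sum (fun k _ => ha k)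
        _ = ((n - (m'+1)^2 : ℕ) : ℝ) := by rw [Finset.sum_const, Nat.card_Ico]; simp
    have hgap : (n - (m'+1)^2 : ℕ) ≤ 2 * m' + 2 := by
      have hexp : (m' + 2)^2 = (m'+1)^2 + (2 * m' + 3) := by ring
      omega
    -- real arithmetic
    set X : ℝ := (m' : ℝ) + 1 with hX
    set J : ℝ := (j : ℝ) + 1 with hJ
    have hXpos : 0 < X := by positivity
    have hJpos : 0 < J := by positivity
    have f3 : J ≤ X := by rw [hX, hJ]; exact_mod_cast hj1
    have f4 : X^2 ≤ (n:ℝ) := by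
      rw [hX]; exact_mod_cast hA
    have f6 : 0 < (n:ℝ) := lt_of_lt_of_le (by positivity) f4
    have hIco : |∑ k ∈ Finset.Ico ((m'+1)^2) n, a k| ≤ 2*X := by
      refine le_trans hcard ?_
      rw [hX]
      have h5 : ((n - (m'+1)^2 : ℕ) : ℝ) ≤ ((2 * m' + 2 : ℕ) : ℝ) := by exact_mod_cast hgap
      refine le_trans h5 ?_
      push_cast; linarith
    have f1 : |∑ k ∈ Finset.range n, a k|
        ≤ |∑ k ∈ Finset.range ((m'+1)^2), a k| + 2*X := by
      rw [← hsplit]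
      exact le_trans (abs_add_le _ _) (by linarith)
    have f2 : |∑ k ∈ Finset.range ((m'+1)^2), a k| ≤ X^2 / J := by
      rw [hX, hJ]; exact hS
    have f2' : |∑ k ∈ Finset.range ((m'+1)^2), a k| * J ≤ X^2 :=
      (le_div_iff₀ hJpos).1 f2
    rw [abs_div, abs_of_pos f6, div_le_div_iff₀ f6 hJpos]
    have hXX : 1 ≤ X := by rw [hX]; push_cast; linarith
    nlinarith [mul_le_mul_of_nonneg_right f1 hJpos.le,
      mul_le_mul_of_nonneg_left f3 (by linarith : (0:ℝ) ≤ 2*X), f2', f4, hXX]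
  rw [Metric.tendsto_atTop]
  intro ε hε
  obtain ⟨j, hj⟩ := exists_nat_gt (3/ε)
  have h3 : 3/((j:ℝ)+1) < ε := by
    rw [div_lt_iff₀ (by positivity)]
    have := (div_lt_iff₀ hε).1 (lt_trans hj (lt_add_one _))
    linarith
  obtain ⟨N, hN⟩ := eventually_atTop.1 (key j)
  exact ⟨N, fun n hn => by
    rw [Real.dist_eq, sub_zero]
    exact lt_of_le_of_lt (hN n hn) h3⟩

section AS

variable {Ω : Type} [mΩ : MeasurableSpace Ω] {μ : Measure Ω}
  {κ : ℝ} {ρ ν : Measure ℝ} {p : ℝ}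
  {env : Ω → ℤ → ℝ} {U ξ Y : Ω → ℕ → ℝ}

lemma as_tendsto_DD (hsetup : SetupI μ κ ρ ν p env U ξ Y)
    (hκ0 : 0 < κ) (hκh : κ < 1/2) (hp0 : 0 ≤ p) (hp1 : p < 1) (α : ℝ) :
    ∀ᵐ w ∂μ, Tendsto (fun n : ℕ =>
      (∑ k ∈ Finset.range n, DD κ p α (env w) (U w) (ξ w) (Y w) k) / n) atTop (nhds 0) := by
  haveI := hsetup.probμ
  set T : ℕ → Ω → ℝ := fun n w => ∑ k ∈ Finset.range n, DD κ p α (env w) (U w) (ξ w) (Y w) k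
    with hT_def
  have hTm : ∀ n, Measurable (T n) :=
    fun n => Finset.measurable_sum _ (fun k _ => meas_DD_amb hsetup κ p α k)
  have hT2int : ∀ n : ℕ, Integrable (fun w => (T n w)^2) μ := by
    intro n
    refine integrable_bdd ((hTm n).pow_const 2) ((n:ℝ)^2) (fun w => ?_)
    have h1 : |T n w| ≤ (n:ℝ) := by
      calc |T n w| ≤ ∑ k ∈ Finset.range n, |DD κ p α (env w) (U w) (ξ w) (Y w) k| :=
            Finset.abs_sum_le_sum_abs _ _
        _ ≤ ∑ _k ∈ Finset.range n, (1:ℝ) := Finset.sum_le_sum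
            (fun k _ => abs_DD_le_one hκ0 hp0 hp1.le _ _ _ _ _)
        _ = n := by simp
    calc |(T n w)^2| = (T n w)^2 := abs_of_nonneg (sq_nonneg _)
      _ = |T n w|^2 := (sq_abs _).symm
      _ ≤ (n:ℝ)^2 := pow_le_pow_left₀ (abs_nonneg _) h1 2
  set A : ℕ → ℕ → Set Ω := fun j m =>
    {w | ((m:ℝ)+1)^2 / ((j:ℝ)+1) ≤ |T ((m+1)^2) w|} with hA_def
  have hcheb : ∀ j m : ℕ, μ (A j m) ≤ ENNReal.ofReal (((j:ℝ)+1)^2 / ((m:ℝ)+1)^2) := by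
    intro j m
    set X : ℝ := (m:ℝ) + 1 with hX
    set J : ℝ := (j:ℝ) + 1 with hJ
    have hXpos : 0 < X := by positivity
    have hJpos : 0 < J := by positivity
    set c : ℝ := X^2 / J with hc
    have hcpos : 0 < c := by positivity
    have hsub : A j m ⊆ {w | c^2 ≤ (T ((m+1)^2) w)^2} := by
      intro w hwA
      have h1 : c ≤ |T ((m+1)^2) w| := hwA
      have h2 : c^2 ≤ |T ((m+1)^2) w|^2 := pow_le_pow_left₀ hcpos.le h1 2
      simpa [sq_abs] using h2
    have hmar := mul_meas_ge_le_integral_of_nonneg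
      (ae_of_all μ (fun w => sq_nonneg (T ((m+1)^2) w))) (hT2int ((m+1)^2)) (c^2)
    have hsm : ∫ w, (T ((m+1)^2) w)^2 ∂μ ≤ (((m+1)^2 : ℕ) : ℝ) :=
      second_moment hsetup hκ0 hκh hp0 hp1 α ((m+1)^2)
    have htoReal : (μ {w | c^2 ≤ (T ((m+1)^2) w)^2}).toReal ≤ (((m+1)^2 : ℕ) : ℝ) / c^2 := by
      rw [le_div_iff₀ (by positivity)]
      calc (μ {w | c^2 ≤ (T ((m+1)^2) w)^2}).toReal * c^2
          = c^2 * (μ {w | c^2 ≤ (T ((m+1)^2) w)^2}).toReal := by ring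
        _ ≤ ∫ w, (T ((m+1)^2) w)^2 ∂μ := hmar
        _ ≤ (((m+1)^2 : ℕ) : ℝ) := hsm
    have hval : (((m+1)^2 : ℕ) : ℝ) / c^2 = J^2 / X^2 := by
      have hcast : (((m+1)^2 : ℕ) : ℝ) = X^2 := by rw [hX]; push_cast; ring
      rw [hcast, hc]
      field_simp
    calc μ (A j m) ≤ μ {w | c^2 ≤ (T ((m+1)^2) w)^2} := measure_mono hsub
      _ = ENNReal.ofReal ((μ {w | c^2 ≤ (T ((m+1)^2) w)^2}).toReal) :=
          (ENNReal.ofReal_toReal (measure_ne_top μ _)).symm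
      _ ≤ ENNReal.ofReal (J^2 / X^2) := by
          refine ENNReal.ofReal_le_ofReal ?_
          rw [← hval]; exact htoReal
  have hsummable : ∀ j : ℕ, Summable (fun m : ℕ => ((j:ℝ)+1)^2 / ((m:ℝ)+1)^2) := by
    intro j
    have h0 : Summable (fun n : ℕ => 1 / (n:ℝ)^2) :=
      Real.summable_one_div_nat_pow.2 (by norm_num)
    have h1 : Summable (fun m : ℕ => 1 / ((m:ℝ)+1)^2) := by
      have := (summable_nat_add_iff 1).2 h0
      simpa using this
    have := h1.mul_left (((j:ℝ)+1)^2)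
    simpa [div_eq_mul_inv, one_div] using this
  have htsum : ∀ j : ℕ, (∑' m, μ (A j m)) ≠ ⊤ := by
    intro j
    have hle : (∑' m, μ (A j m)) ≤ ∑' m : ℕ, ENNReal.ofReal (((j:ℝ)+1)^2 / ((m:ℝ)+1)^2) :=
      ENNReal.tsum_le_tsum (hcheb j)
    rw [← ENNReal.ofReal_tsum_of_nonneg (fun m => by positivity) (hsummable j)] at hle
    exact ne_top_of_le_ne_top ENNReal.ofReal_ne_top hle
  have hBC : ∀ᵐ w ∂μ, ∀ j : ℕ, ∀ᶠ m in atTop, w ∉ A j m :=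
    ae_all_iff.2 (fun j => ae_eventually_notMem (htsum j))
  filter_upwards [hBC] with w hw
  refine tendsto_div_of_sq _ (fun k => abs_DD_le_one hκ0 hp0 hp1.le _ _ _ _ _) (fun j => ?_)
  filter_upwards [hw j] with m hm
  have : ¬ (((m:ℝ)+1)^2 / ((j:ℝ)+1) ≤ |T ((m+1)^2) w|) := hm
  have h2 := (not_le.1 this).le
  calc |∑ k ∈ Finset.range ((m+1)^2), DD κ p α (env w) (U w) (ξ w) (Y w) k|
      = |T ((m+1)^2) w| := rfl
    _ ≤ ((m:ℝ)+1)^2 / ((j:ℝ)+1) := h2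

end AS


/-- In situation i), for an atom α of ρ which is not an atom of ν: almost surely, on the event
that the asymptotic frequencies h(αα) of double α's and h(ααα) of triple α's in χ both exist
and h(αα) > 0, one has h(ααα) ≥ (1-p)·κ·h(αα). -/
theorem freq_triple_ge_sitI
    (κ : ℝ) (hκ : κ ∈ Set.Ioo (0:ℝ) (1/2))
    {Ω : Type} [mΩ : MeasurableSpace Ω] (μ : Measure Ω)
    (ρ ν : Measure ℝ) (p : ℝ) (hp : p ∈ Set.Ico (0:ℝ) 1)
    (env : Ω → ℤ → ℝ) (U ξ Y : Ω → ℕ → ℝ)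
    (hsetup : SetupI μ κ ρ ν p env U ξ Y)
    (α : ℝ) (hαρ : ρ {α} ≠ 0) (hαν : ν {α} = 0) :
    ∀ᵐ w ∂μ, ∀ haa haaa : ℝ,
      Tendsto
        (fun n : ℕ => (1 / (n : ℝ)) * ∑ k ∈ Finset.range n,
          ind (obsI (env w) (U w) (ξ w) (Y w) k = α ∧
               obsI (env w) (U w) (ξ w) (Y w) (k + 1) = α))
        atTop (nhds haa) →
      Tendsto
        (fun n : ℕ => (1 / (n : ℝ)) * ∑ k ∈ Finset.range n,
          ind (obsI (env w) (U w) (ξ w) (Y w) k = α ∧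
               obsI (env w) (U w) (ξ w) (Y w) (k + 1) = α ∧
               obsI (env w) (U w) (ξ w) (Y w) (k + 2) = α))
        atTop (nhds haaa) →
      0 < haa → (1 - p) * κ * haa ≤ haaa := by
  obtain ⟨hκ0, hκh⟩ := hκ
  obtain ⟨hp0, hp1⟩ := hp
  haveI := hsetup.probμ
  haveI := hsetup.probρ
  haveI := hsetup.probν
  -- a.s. the environment is inside (κ, 1-κ)
  have hA2 : ∀ᵐ w ∂μ, ∀ z : ℤ, env w z ∈ Set.Ioo κ (1 - κ) := by
    rw [ae_all_iff]
    intro z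
    have hmeas : Measurable (fun w => env w z) := hsetup.meas (Sum.inl z)
    have h0 : μ ((fun w => env w z) ⁻¹' (Set.Ioo κ (1 - κ))ᶜ) = 0 := by
      rw [← Measure.map_apply hmeas measurableSet_Ioo.compl, hsetup.lawEnv z,
        measure_compl measurableSet_Ioo (measure_ne_top _ _), hsetup.suppρ]
      simp
    rw [ae_iff]
    exact h0
  -- a.s. the Bernoulli variables take values 0, 1
  have hA3 : ∀ᵐ w ∂μ, ∀ n : ℕ, ξ w n = 0 ∨ ξ w n = 1 := by
    rw [ae_all_iff]
    intro n
    have hmeas : Measurable (fun w => ξ w n) := hsetup.meas (Sum.inr (Sum.inr (Sum.inl n)))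
    have hs : MeasurableSet {x : ℝ | ¬ (x = 0 ∨ x = 1)} := by
      have : {x : ℝ | ¬ (x = 0 ∨ x = 1)} = ({0, 1} : Set ℝ)ᶜ := by
        ext x; simp [Set.mem_insert_iff]
      rw [this]
      exact (MeasurableSet.insert (measurableSet_singleton 1) 0).compl
    have h0 : μ ((fun w => ξ w n) ⁻¹' {x : ℝ | ¬ (x = 0 ∨ x = 1)}) = 0 := by
      rw [← Measure.map_apply hmeas hs, hsetup.lawξ n, bern]
      rw [Measure.add_apply, Measure.smul_apply, Measure.smul_apply,
        Measure.dirac_apply' _ hs, Measure.dirac_apply' _ hs]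
      simp
    rw [ae_iff]
    exact h0
  -- a.s. the noise values avoid α
  have hA1 : ∀ᵐ w ∂μ, ∀ n : ℕ, Y w n ≠ α := by
    rw [ae_all_iff]
    intro n
    have hmeas : Measurable (fun w => Y w n) := hsetup.meas (Sum.inr (Sum.inr (Sum.inr n)))
    have h0 : μ ((fun w => Y w n) ⁻¹' {α}) = 0 := by
      rw [← Measure.map_apply hmeas (measurableSet_singleton α), hsetup.lawY n]
      exact hαν
    rw [ae_iff]
    simp only [ne_eq, not_not]
    exact h0
  have hA4 := as_tendsto_DD hsetup hκ0 hκh hp0 hp1 α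
  filter_upwards [hA1, hA2, hA3, hA4] with w h1 h2 h3 h4
  intro haa haaa hpairT htripT _
  have hkey : ∀ k, DD κ p α (env w) (U w) (ξ w) (Y w) k
      + (1 - p) * κ * ind (obsI (env w) (U w) (ξ w) (Y w) k = α ∧
          obsI (env w) (U w) (ξ w) (Y w) (k + 1) = α)
      ≤ ind (obsI (env w) (U w) (ξ w) (Y w) k = α ∧
          obsI (env w) (U w) (ξ w) (Y w) (k + 1) = α ∧
          obsI (env w) (U w) (ξ w) (Y w) (k + 2) = α) :=
    fun k => key_pointwise hκ0 hp0 hp1.le h2 h3 h1 k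
  set F : ℕ → ℝ := fun n => (∑ k ∈ Finset.range n, DD κ p α (env w) (U w) (ξ w) (Y w) k) / n
    + ((1 - p) * κ) * ((1 / (n : ℝ)) * ∑ k ∈ Finset.range n,
        ind (obsI (env w) (U w) (ξ w) (Y w) k = α ∧
          obsI (env w) (U w) (ξ w) (Y w) (k + 1) = α)) with hF_def
  set G : ℕ → ℝ := fun n => (1 / (n : ℝ)) * ∑ k ∈ Finset.range n,
      ind (obsI (env w) (U w) (ξ w) (Y w) k = α ∧
        obsI (env w) (U w) (ξ w) (Y w) (k + 1) = α ∧
        obsI (env w) (U w) (ξ w) (Y w) (k + 2) = α) with hG_def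
  have hFG : ∀ᶠ n in atTop, F n ≤ G n := by
    refine eventually_atTop.2 ⟨1, fun n hn => ?_⟩
    have hn0 : (0:ℝ) < (n:ℝ) := by exact_mod_cast hn
    have hsum : ∑ k ∈ Finset.range n, (DD κ p α (env w) (U w) (ξ w) (Y w) k
        + (1 - p) * κ * ind (obsI (env w) (U w) (ξ w) (Y w) k = α ∧
            obsI (env w) (U w) (ξ w) (Y w) (k + 1) = α))
        ≤ ∑ k ∈ Finset.range n, ind (obsI (env w) (U w) (ξ w) (Y w) k = α ∧
            obsI (env w) (U w) (ξ w) (Y w) (k + 1) = α ∧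
            obsI (env w) (U w) (ξ w) (Y w) (k + 2) = α) :=
      Finset.sum_le_sum (fun k _ => hkey k)
    rw [Finset.sum_add_distrib, ← Finset.mul_sum] at hsum
    rw [hF_def, hG_def]
    simp only
    have e1 : (∑ k ∈ Finset.range n, DD κ p α (env w) (U w) (ξ w) (Y w) k) / n
        + ((1 - p) * κ) * ((1 / (n : ℝ)) * ∑ k ∈ Finset.range n,
            ind (obsI (env w) (U w) (ξ w) (Y w) k = α ∧
              obsI (env w) (U w) (ξ w) (Y w) (k + 1) = α))
        = (1 / (n : ℝ)) * ((∑ k ∈ Finset.range n, DD κ p α (env w) (U w) (ξ w) (Y w) k)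
            + (1 - p) * κ * ∑ k ∈ Finset.range n,
              ind (obsI (env w) (U w) (ξ w) (Y w) k = α ∧
                obsI (env w) (U w) (ξ w) (Y w) (k + 1) = α)) := by ring
    rw [e1]
    exact mul_le_mul_of_nonneg_left hsum (by positivity)
  have hFlim : Tendsto F atTop (nhds (0 + ((1 - p) * κ) * haa)) :=
    Tendsto.add h4 (hpairT.const_mul ((1 - p) * κ))
  have hGlim : Tendsto G atTop (nhds haaa) := htripT
  have hle : 0 + ((1 - p) * κ) * haa ≤ haaa :=
    le_of_tendsto_of_tendsto hFlim hGlim hFG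
  linarith
end
end

section
/- Let D ∈ (0,1), let ρ be a Borel probability measure on (D,1/D), let Ω = (D,1/D)^ℤ with the product measure P = ρ^ℤ, and let Z := 2∫ x dρ(x). Let Q be the probability measure on Ω with density dQ/dP(ω) = (ω(−1)+ω(0))/Z, and let R be the Markov kernel on Ω given by R(ω,·) = (ω(0)/(ω(0)+ω(−1)))·δ_{τ₁ω} + (ω(−1)/(ω(0)+ω(−1)))·δ_{τ₋₁ω}, where τ_x denotes the shift (τ_xω)(z) = ω(z+x). Then Q is invariant for R, i.e., ∫ R(ω, A) dQ(ω) = Q(A) for every Borel set A ⊆ Ω. -/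
open MeasureTheory ProbabilityTheory Set

noncomputable section

lemma cylinder_measure
    (ρ : Measure ℝ) (P : Measure (ℤ → ℝ))
    (hiid : iIndepFun (fun (z : ℤ) (w : ℤ → ℝ) => w z) P)
    (hlaw : ∀ z : ℤ, P.map (fun w => w z) = ρ)
    (s : Finset ℤ) (t : ℤ → Set ℝ) (ht : ∀ i, MeasurableSet (t i)) :
    P ((s : Set ℤ).pi t) = ∏ i ∈ s, ρ (t i) := by
  have h1 : (s : Set ℤ).pi t = ⋂ i ∈ s, (fun w : ℤ → ℝ => w i) ⁻¹' t i := by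
    ext w; simp [Set.mem_pi]
  rw [h1, hiid.measure_inter_preimage_eq_mul s (fun i _ => ht i)]
  refine Finset.prod_congr rfl fun i _ => ?_
  rw [← hlaw i, Measure.map_apply (measurable_pi_apply i) (ht i)]

lemma shift_invariant
    (ρ : Measure ℝ) (P : Measure (ℤ → ℝ)) (hP : IsProbabilityMeasure P)
    (hiid : iIndepFun (fun (z : ℤ) (w : ℤ → ℝ) => w z) P)
    (hlaw : ∀ z : ℤ, P.map (fun w => w z) = ρ) (c : ℤ) :
    P.map (fun (w : ℤ → ℝ) z => w (z + c)) = P := by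
  have hσ : Measurable (fun (w : ℤ → ℝ) z => w (z + c)) :=
    measurable_pi_lambda _ fun z => measurable_pi_apply _
  have : IsProbabilityMeasure (P.map (fun (w : ℤ → ℝ) z => w (z + c))) :=
    Measure.isProbabilityMeasure_map hσ.aemeasurable
  refine ext_of_generate_finite _ generateFrom_squareCylinders.symm
    (isPiSystem_squareCylinders (fun _ => MeasurableSpace.isPiSystem_measurableSet) (fun _ => Set.mem_setOf.mpr MeasurableSet.univ))
    ?_ (by simp)
  rintro S ⟨s, t, htmem, rfl⟩
  have ht : ∀ i, MeasurableSet (t i) := fun i => htmem i (Set.mem_univ i)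
  have hSm : MeasurableSet ((s : Set ℤ).pi t) :=
    MeasurableSet.pi (Set.to_countable _) fun i _ => ht i
  rw [Measure.map_apply hσ hSm]
  have hpre : (fun (w : ℤ → ℝ) z => w (z + c)) ⁻¹' ((s : Set ℤ).pi t)
      = ((s.image (· + c) : Finset ℤ) : Set ℤ).pi (fun j => t (j - c)) := by
    ext w
    simp only [Set.mem_preimage, Set.mem_pi, Finset.coe_image, Set.mem_image, Finset.mem_coe]
    constructor
    · rintro h j ⟨i, hi, rfl⟩
      have := h i hi
      rwa [add_sub_cancel_right]
    · intro h i hi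
      have := h (i + c) ⟨i, hi, rfl⟩
      rwa [add_sub_cancel_right] at this
  rw [hpre, cylinder_measure ρ P hiid hlaw _ _ (fun j => ht (j - c)),
    cylinder_measure ρ P hiid hlaw s t ht,
    Finset.prod_image (by intro a _ b _ h; exact add_right_cancel h)]
  exact Finset.prod_congr rfl fun i _ => by rw [add_sub_cancel_right]

end
/-- **Invariance of Q for the environment viewed from the particle.** Let P be the law of an
i.i.d. sequence of conductances with marginal ρ on (D,1/D), let Z = 2∫x dρ and let Q be the
measure with density (ω(-1)+ω(0))/Z with respect to P. Then Q is invariant for the kernel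
R(ω,·) = ω(0)/(ω(0)+ω(-1))·δ_{τ₁ω} + ω(-1)/(ω(0)+ω(-1))·δ_{τ₋₁ω} of the environment viewed
from the particle: for every Borel set A, ∫ R(ω,A) dQ(ω) = Q(A). -/
theorem env_viewed_from_particle_invariant
    (D : ℝ) (hD : D ∈ Set.Ioo (0:ℝ) 1)
    (ρ : Measure ℝ) (hρ : IsProbabilityMeasure ρ) (hsupp : ρ (Set.Ioo D (1/D)) = 1)
    (P : Measure (ℤ → ℝ)) (hP : IsProbabilityMeasure P)
    (hiid : iIndepFun (fun (z : ℤ) (w : ℤ → ℝ) => w z) P)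
    (hlaw : ∀ z : ℤ, P.map (fun w => w z) = ρ)
    (Z : ℝ) (hZ : Z = 2 * ∫ x, x ∂ρ)
    (Q : Measure (ℤ → ℝ))
    (hQ : Q = P.withDensity (fun w => ENNReal.ofReal ((w (-1) + w 0) / Z))) :
    ∀ A : Set (ℤ → ℝ), MeasurableSet A →
      ∫⁻ w, (ENNReal.ofReal (w 0 / (w 0 + w (-1))) *
              A.indicator (fun _ => (1 : ENNReal)) (fun z => w (z + 1))
            + ENNReal.ofReal (w (-1) / (w 0 + w (-1))) *
              A.indicator (fun _ => (1 : ENNReal)) (fun z => w (z + -1))) ∂Q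
        = Q A := by
  intro A hA
  have hDpos : 0 < D := hD.1
  have hcompl : ρ (Set.Ioo D (1/D))ᶜ = 0 := by
    rw [prob_compl_eq_zero_iff measurableSet_Ioo]; exact hsupp
  have hae : ∀ᵐ x ∂ρ, x ∈ Set.Ioo D (1/D) := by
    rw [ae_iff]; exact hcompl
  have hint : Integrable (fun x : ℝ => x) ρ := by
    refine Integrable.mono' (integrable_const (1/D)) measurable_id.aestronglyMeasurable ?_
    filter_upwards [hae] with x hx
    rw [Real.norm_eq_abs, abs_of_pos (lt_trans hDpos hx.1)]
    exact le_of_lt hx.2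
  have hZpos : 0 < Z := by
    have h1 : D ≤ ∫ x, x ∂ρ := by
      have h2 := integral_mono_ae (integrable_const D) hint
        (by filter_upwards [hae] with x hx; exact le_of_lt hx.1)
      simpa using h2
    rw [hZ]; linarith
  have haeP : ∀ z : ℤ, ∀ᵐ w ∂P, w z ∈ Set.Ioo D (1/D) := by
    intro z
    rw [ae_iff]
    have heq : {w : ℤ → ℝ | ¬ w z ∈ Set.Ioo D (1/D)}
        = (fun w : ℤ → ℝ => w z) ⁻¹' (Set.Ioo D (1/D))ᶜ := rfl
    rw [heq, ← Measure.map_apply (measurable_pi_apply z) measurableSet_Ioo.compl, hlaw z]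
    exact hcompl
  -- notation
  set I : (ℤ → ℝ) → ENNReal := A.indicator (fun _ => 1) with hIdef
  have hImeas : Measurable I := measurable_const.indicator hA
  have hσ1 : Measurable fun (w : ℤ → ℝ) z => w (z + 1) :=
    measurable_pi_lambda _ fun z => measurable_pi_apply _
  have hσ2 : Measurable fun (w : ℤ → ℝ) z => w (z + -1) :=
    measurable_pi_lambda _ fun z => measurable_pi_apply _
  set g : (ℤ → ℝ) → ENNReal := fun w => ENNReal.ofReal ((w (-1) + w 0) / Z) with hgdef
  have hgmeas : Measurable g :=
    (((measurable_pi_apply (-1)).add (f := fun w : ℤ → ℝ => w (-1)) (g := fun w : ℤ → ℝ => w 0) (measurable_pi_apply 0)).div_const Z).ennreal_ofReal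
  set F : (ℤ → ℝ) → ENNReal := fun w =>
      ENNReal.ofReal (w 0 / (w 0 + w (-1))) * I (fun z => w (z + 1))
    + ENNReal.ofReal (w (-1) / (w 0 + w (-1))) * I (fun z => w (z + -1)) with hFdef
  have hFmeas : Measurable F := by
    apply Measurable.add
    · exact (((measurable_pi_apply 0).div
        ((measurable_pi_apply 0).add (measurable_pi_apply (-1)))).ennreal_ofReal).mul
        (hImeas.comp hσ1)
    · exact (((measurable_pi_apply (-1)).div
        ((measurable_pi_apply 0).add (measurable_pi_apply (-1)))).ennreal_ofReal).mul
        (hImeas.comp hσ2)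
  set h₁ : (ℤ → ℝ) → ENNReal := fun v => ENNReal.ofReal (v (-1) / Z) * I v with hh₁def
  set h₂ : (ℤ → ℝ) → ENNReal := fun v => ENNReal.ofReal (v 0 / Z) * I v with hh₂def
  have hh₁meas : Measurable h₁ :=
    ((measurable_pi_apply (-1) : Measurable fun v : ℤ → ℝ => v (-1)).div_const Z).ennreal_ofReal.mul hImeas
  have hh₂meas : Measurable h₂ :=
    ((measurable_pi_apply 0 : Measurable fun v : ℤ → ℝ => v 0).div_const Z).ennreal_ofReal.mul hImeas
  have step0 : ∫⁻ w, F w ∂Q = ∫⁻ w, (g * F) w ∂P := by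
    rw [hQ]; exact lintegral_withDensity_eq_lintegral_mul P hgmeas hFmeas
  have step1 : ∫⁻ w, (g * F) w ∂P
      = ∫⁻ w, (h₁ (fun z => w (z + 1)) + h₂ (fun z => w (z + -1))) ∂P := by
    refine lintegral_congr_ae ?_
    filter_upwards [haeP 0, haeP (-1)] with w hw0 hwm
    have hb : 0 < w 0 := lt_trans hDpos hw0.1
    have ha : 0 < w (-1) := lt_trans hDpos hwm.1
    have hba : w 0 + w (-1) ≠ 0 := by positivity
    have e1 : (fun z => w (z + 1)) (-1) = w 0 := by norm_num
    have e2 : (fun z => w (z + -1)) 0 = w (-1) := by norm_num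
    simp only [Pi.mul_apply, hFdef, hgdef, hh₁def, hh₂def, e1, e2]
    rw [mul_add, ← mul_assoc, ← mul_assoc,
      ← ENNReal.ofReal_mul (by positivity), ← ENNReal.ofReal_mul (by positivity)]
    congr 3
    · field_simp; ring
    · field_simp; ring
  have hmap1 : P.map (fun (w : ℤ → ℝ) z => w (z + 1)) = P :=
    shift_invariant ρ P hP hiid hlaw 1
  have hmap2 : P.map (fun (w : ℤ → ℝ) z => w (z + -1)) = P :=
    shift_invariant ρ P hP hiid hlaw (-1)
  have step2 : ∫⁻ w, (h₁ (fun z => w (z + 1)) + h₂ (fun z => w (z + -1))) ∂P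
      = ∫⁻ v, (h₁ v + h₂ v) ∂P := by
    have hm1 : Measurable fun w : ℤ → ℝ => h₁ fun z => w (z + 1) := hh₁meas.comp hσ1
    rw [lintegral_add_left hm1, lintegral_add_left hh₁meas]
    congr 1
    · rw [← lintegral_map hh₁meas hσ1, hmap1]
    · rw [← lintegral_map hh₂meas hσ2, hmap2]
  have step3 : ∫⁻ v, (h₁ v + h₂ v) ∂P = ∫⁻ v, A.indicator g v ∂P := by
    refine lintegral_congr_ae ?_
    filter_upwards [haeP 0, haeP (-1)] with v hv0 hvm
    have hb : 0 ≤ v 0 := le_of_lt (lt_trans hDpos hv0.1)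
    have ha : 0 ≤ v (-1) := le_of_lt (lt_trans hDpos hvm.1)
    simp only [hh₁def, hh₂def]
    rw [← add_mul, ← ENNReal.ofReal_add (by positivity) (by positivity), ← add_div]
    by_cases hvA : v ∈ A
    · simp [hIdef, hgdef, Set.indicator_of_mem hvA]
    · simp [hIdef, hgdef, Set.indicator_of_notMem hvA]
  rw [step0, step1, step2, step3, lintegral_indicator hA g, hQ, withDensity_apply _ hA]
end

section
/- Let D ∈ (0,1), let ρ be a Borel probability measure on (D,1/D), and let α ∈ (D,1/D) with ρ({α}) > 0 and ρ ≠ δ_α (ρ is not the Dirac measure at α). Then ρ({α}) + ∫ (α/(α+x))·1{x ≠ α} dρ(x) > α·ρ({α}) / ∫ x dρ(x). -/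
open MeasureTheory

noncomputable section

/-- If a probability measure gives full mass to a singleton, it is the Dirac measure. -/
lemma prob_eq_dirac_of_singleton_full (ρ : Measure ℝ) [IsProbabilityMeasure ρ] (α : ℝ)
    (h : ρ {α} = 1) : ρ = Measure.dirac α := by
  have hc : ρ {α}ᶜ = 0 := by
    have := measure_compl (measurableSet_singleton α) (measure_ne_top ρ _)
    simp [h, this]
  ext s hs
  rw [Measure.dirac_apply' _ hs]
  by_cases hα : α ∈ s
  · have h1 : ρ s ≤ 1 := prob_le_one
    have h2 : (1:ENNReal) = ρ {α} := h.symm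
    have h3 : ρ {α} ≤ ρ s := measure_mono (Set.singleton_subset_iff.2 hα)
    simp [Set.indicator_of_mem hα]
    exact le_antisymm h1 (h2 ▸ h3)
  · have h3 : ρ s ≤ ρ {α}ᶜ := measure_mono (fun x hx => by
      simp only [Set.mem_compl_iff, Set.mem_singleton_iff]
      rintro rfl; exact hα hx)
    simp [Set.indicator_of_notMem hα]
    exact le_antisymm (hc ▸ h3) zero_le

/-- Auxiliary algebraic inequality. -/
lemma final_aux_ineq (α p q m t : ℝ) (hα : 0 < α) (hp : 0 < p) (hq : 0 < q) (hm : 0 < m)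
    (hpq : p + q = 1) (ht : t = α + m) :
    α * p / (α * p + m * q) < p + α / t * q := by
  subst ht
  have hq' : q = 1 - p := by linarith
  subst hq'
  rw [div_lt_iff₀ (by positivity)]
  have key : (p + α / (α + m) * (1 - p)) * (α * p + m * (1 - p)) - α * p
      = (1 - p) * (p * m ^ 2 + α * (1 - p) * m) / (α + m) := by
    field_simp
    ring
  have hpos : 0 < (1 - p) * (p * m ^ 2 + α * (1 - p) * m) / (α + m) := by positivity
  linarith

/-- **The strict inequality h(α|α) > h(α) from the proof of Lemma 2.4.** For a Borel
probability measure ρ on (D,1/D) with an atom α and ρ ≠ δ_α, one has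
ρ({α}) + ∫ (α/(α+x))·1{x ≠ α} dρ > α·ρ({α}) / ∫x dρ. -/
theorem conditioned_frequency_strict_inequality
    (D : ℝ) (hD : D ∈ Set.Ioo (0:ℝ) 1)
    (ρ : Measure ℝ) (hρ : IsProbabilityMeasure ρ) (hsupp : ρ (Set.Ioo D (1/D)) = 1)
    (α : ℝ) (hα : α ∈ Set.Ioo D (1/D))
    (hatom : ρ {α} ≠ 0) (hnd : ρ ≠ Measure.dirac α) :
    α * (ρ {α}).toReal / ∫ x, x ∂ρ
      < (ρ {α}).toReal + ∫ x, Set.indicator {α}ᶜ (fun x => α / (α + x)) x ∂ρ := by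
  obtain ⟨hD0, hD1⟩ := hD
  obtain ⟨hαD, hαD'⟩ := hα
  have hα0 : (0:ℝ) < α := hD0.trans hαD
  -- almost everywhere x ∈ Ioo D (1/D)
  have hae : ∀ᵐ x ∂ρ, x ∈ Set.Ioo D (1/D) := by
    have hc : ρ (Set.Ioo D (1/D))ᶜ = 0 := by
      rw [measure_compl measurableSet_Ioo (measure_ne_top ρ _), hsupp]
      simp
    exact (ae_iff).2 hc
  -- basic quantities
  set p : ℝ := (ρ {α}).toReal with hp_def
  set q : ℝ := (ρ {α}ᶜ).toReal with hq_def
  have hmeasα : MeasurableSet ({α} : Set ℝ) := measurableSet_singleton α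
  have hpq : p + q = 1 := by
    have := measure_add_measure_compl (μ := ρ) hmeasα
    have h1 : (ρ {α} + ρ {α}ᶜ).toReal = (1:ENNReal).toReal := by rw [this]; simp
    rw [ENNReal.toReal_add (measure_ne_top ρ _) (measure_ne_top ρ _)] at h1
    simpa using h1
  have hp0 : 0 < p := by
    have := ENNReal.toReal_pos hatom (measure_ne_top ρ _)
    exact this
  have hp1 : p < 1 := by
    rcases lt_or_eq_of_le (prob_le_one (μ := ρ) (s := {α})) with h | h
    · exact ENNReal.toReal_lt_of_lt_ofReal (by simpa using h)
    · exact absurd (prob_eq_dirac_of_singleton_full ρ α h) hnd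
  have hq0 : 0 < q := by linarith
  -- integrability of bounded measurable functions
  have hbound : ∀ (f : ℝ → ℝ) (C : ℝ), AEStronglyMeasurable f ρ →
      (∀ᵐ x ∂ρ, ‖f x‖ ≤ C) → Integrable f ρ := fun f C hm hb =>
    (integrable_const C).mono' hm hb
  have hInt_x : Integrable (fun x : ℝ => x) ρ := by
    refine hbound _ (1/D) aestronglyMeasurable_id ?_
    filter_upwards [hae] with x hx
    rw [Real.norm_eq_abs, abs_le]
    constructor
    · nlinarith [hx.1, hx.2]
    · exact le_of_lt hx.2
  have hInt_ind : Integrable (fun x => Set.indicator ({α}ᶜ) (fun y : ℝ => y) x) ρ :=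
    hInt_x.indicator hmeasα.compl
  set S : ℝ := ∫ x, Set.indicator ({α}ᶜ) (fun y : ℝ => y) x ∂ρ with hS_def
  -- q as an integral
  have hq_int : ∫ x, Set.indicator ({α}ᶜ) (fun _ : ℝ => (1:ℝ)) x ∂ρ = q := by
    rw [integral_indicator_const (1:ℝ) hmeasα.compl]; simp [hq_def, Measure.real]
  -- S ≥ D * q > 0
  have hSD : D * q ≤ S := by
    have h1 : ∫ x, Set.indicator ({α}ᶜ) (fun _ : ℝ => D) x ∂ρ = D * q := by
      rw [integral_indicator_const D hmeasα.compl]; simp [hq_def, mul_comm, Measure.real]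
    rw [← h1]
    refine integral_mono_ae (hbound _ D ((aestronglyMeasurable_const).indicator hmeasα.compl)
      ?_) hInt_ind ?_
    · filter_upwards with x
      by_cases hx : x ∈ ({α}ᶜ : Set ℝ) <;>
        simp [Set.indicator_of_mem, Set.indicator_of_notMem, hx, abs_of_pos hD0, le_abs_self,
          abs_nonneg, le_of_lt hD0]
    · filter_upwards [hae] with x hx
      by_cases hmem : x ∈ ({α}ᶜ : Set ℝ)
      · simp only [Set.indicator_of_mem hmem]; exact le_of_lt hx.1
      · simp [Set.indicator_of_notMem hmem]
  have hS0 : 0 < S := lt_of_lt_of_le (by positivity) hSD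
  set m : ℝ := S / q with hm_def
  have hm0 : 0 < m := div_pos hS0 hq0
  have hmq : m * q = S := by rw [hm_def]; exact div_mul_cancel₀ S hq0.ne'
  set t : ℝ := α + m with ht_def
  have ht0 : 0 < t := by positivity
  -- ∫ x dρ = α * p + S
  have hMsplit : ∫ x, x ∂ρ = α * p + S := by
    have hfun : (fun x : ℝ => x) =
        fun x => Set.indicator ({α} : Set ℝ) (fun y : ℝ => y) x
          + Set.indicator ({α}ᶜ) (fun y : ℝ => y) x := by
      funext x
      by_cases hx : x ∈ ({α} : Set ℝ) <;>
        simp [Set.indicator_of_mem, Set.indicator_of_notMem, hx]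
    have hIα : ∫ x, Set.indicator ({α} : Set ℝ) (fun y : ℝ => y) x ∂ρ = α * p := by
      rw [integral_indicator hmeasα]
      have : ∀ x ∈ ({α} : Set ℝ), x = α := fun x hx => hx
      rw [setIntegral_congr_fun hmeasα this, setIntegral_const]
      simp [hp_def, mul_comm, Measure.real]
    conv_lhs => rw [hfun]
    rw [integral_add (hInt_x.indicator hmeasα) hInt_ind, hIα]
  have hM0 : 0 < ∫ x, x ∂ρ := by rw [hMsplit]; positivity
  -- the integrand in the goal, and its linear lower bound
  set f : ℝ → ℝ := fun x => Set.indicator ({α}ᶜ) (fun x => α / (α + x)) x with hf_def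
  set g : ℝ → ℝ := fun x => Set.indicator ({α}ᶜ)
    (fun x => α / t - α / t ^ 2 * (x - m)) x with hg_def
  have hf_meas : AEStronglyMeasurable f ρ := by
    refine (AEStronglyMeasurable.indicator ?_ hmeasα.compl)
    exact (measurable_const.div ((measurable_const.add measurable_id))).aestronglyMeasurable
  have hf_int : Integrable f ρ := by
    refine hbound _ 1 hf_meas ?_
    filter_upwards [hae] with x hx
    have hx0 : 0 < x := hD0.trans hx.1
    by_cases hmem : x ∈ ({α}ᶜ : Set ℝ)
    · simp only [hf_def, Set.indicator_of_mem hmem, Real.norm_eq_abs]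
      rw [abs_of_nonneg (by positivity)]
      rw [div_le_one (by positivity)]
      linarith
    · simp [hf_def, Set.indicator_of_notMem hmem]
  -- g as combination of indicators
  have hg_split : g = fun x => (α / t + α / t ^ 2 * m) * Set.indicator ({α}ᶜ)
      (fun _ : ℝ => (1:ℝ)) x - α / t ^ 2 * Set.indicator ({α}ᶜ) (fun y : ℝ => y) x := by
    funext x
    by_cases hx : x ∈ ({α}ᶜ : Set ℝ) <;>
      simp [hg_def, Set.indicator_of_mem, Set.indicator_of_notMem, hx] <;> ring
  have hg_int : Integrable g ρ := by
    rw [hg_split]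
    exact (((integrable_const (1:ℝ)).indicator hmeasα.compl).const_mul _).sub
      (hInt_ind.const_mul _)
  have hg_val : ∫ x, g x ∂ρ = α / t * q := by
    rw [hg_split, integral_sub (((integrable_const (1:ℝ)).indicator hmeasα.compl).const_mul _)
      (hInt_ind.const_mul _), integral_const_mul, integral_const_mul, hq_int, ← hS_def, ← hmq]
    ring
  -- pointwise a.e. bound g ≤ f
  have hgf : ∫ x, g x ∂ρ ≤ ∫ x, f x ∂ρ := by
    refine integral_mono_ae hg_int hf_int ?_
    filter_upwards [hae] with x hx
    by_cases hmem : x ∈ ({α}ᶜ : Set ℝ)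
    · simp only [hg_def, hf_def, Set.indicator_of_mem hmem]
      have hx0 : 0 < x := hD0.trans hx.1
      have hax : 0 < α + x := by positivity
      have key : α / (α + x) - (α / t - α / t ^ 2 * (x - m))
          = α * (x - m) ^ 2 / ((α + x) * t ^ 2) := by
        field_simp
        ring
      have hnn : 0 ≤ α * (x - m) ^ 2 / ((α + x) * t ^ 2) := by positivity
      linarith [key, hnn]
    · simp [hg_def, hf_def, Set.indicator_of_notMem hmem]
  have hI : α / t * q ≤ ∫ x, f x ∂ρ := hg_val ▸ hgf
  -- final algebraic step
  rw [hMsplit, ← hmq]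
  have hfinal : α * p / (α * p + m * q) < p + α / t * q :=
    final_aux_ineq α p q m t hα0 hp0 hq0 hm0 hpq ht_def
  calc α * p / (α * p + m * q) < p + α / t * q := hfinal
    _ ≤ p + ∫ x, f x ∂ρ := by linarith
end
end
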